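/- For n ≥ 5, the complement of the cycle graph C_n is a connected 2-metamour-regular graph, and its metamour graph equals C_n. -/

import Mathlib

namespace SimpleGraph

variable {V : Type*}

/-- The metamour graph of `G`: same vertices, adjacency = distance exactly 2 in `G`. -/
def metamour (G : SimpleGraph V) : SimpleGraph V where
  Adj u v := G.dist u v = 2
  symm := by
    constructor
    intro u v h
    rwa [dist_comm]
  loopless := by
    constructor
    intro v h
    simp [dist_self] at h

/-- The metamour-degree of a vertex: the number of its metamours. -/
noncomputable def metamourDegree (G : SimpleGraph V) (v : V) : ℕ :=
  {u | G.metamour.Adj v u}.ncard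

end SimpleGraph

/-!
In the complement `Gᶜ` two vertices are at distance two exactly when they are adjacent in `G`
and have a common non-neighbour in `G`. On `C_n` with `n ≥ 5` the vertex `u + 3` is a common
non-neighbour of the consecutive vertices `u` and `u + 1`, so the metamour graph of `C_nᶜ` is
`C_n` itself. Every vertex of the cycle has degree two, and since any two distinct vertices are
adjacent in `C_nᶜ` or at distance two in it, `C_nᶜ` is connected.
-/

namespace SimpleGraph

variable {V : Type*}

theorem dist_eq_two_iff {G : SimpleGraph V} {u v : V} :
    G.dist u v = 2 ↔ u ≠ v ∧ ¬G.Adj u v ∧ (G.commonNeighbors u v).Nonempty := by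
  rw [dist, ENat.toNat_eq_iff two_ne_zero]
  exact edist_eq_two_iff

theorem compl_metamour_eq_self {G : SimpleGraph V}
    (h : ∀ ⦃u v⦄, G.Adj u v → (Gᶜ.commonNeighbors u v).Nonempty) : Gᶜ.metamour = G := by
  ext u v
  change Gᶜ.dist u v = 2 ↔ G.Adj u v
  rw [dist_eq_two_iff, compl_adj]
  exact ⟨fun ⟨hne, hnadj, _⟩ ↦ by tauto, fun hadj ↦ ⟨hadj.ne, fun h' ↦ h'.2 hadj, h hadj⟩⟩

theorem connected_of_compl_le_metamour [Nonempty V] {H : SimpleGraph V} (h : Hᶜ ≤ H.metamour) :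
    H.Connected := by
  refine ⟨fun u v ↦ ?_⟩
  by_cases huv : u = v
  · exact huv ▸ Reachable.refl u
  by_cases hadj : H.Adj u v
  · exact hadj.reachable
  have hmeta : H.dist u v = 2 := h (compl_adj H u v |>.mpr ⟨huv, hadj⟩)
  exact Reachable.of_dist_ne_zero (by omega)

end SimpleGraph

open Fin.CommRing

theorem Fin.natCast_ne_zero_of_lt {n k : ℕ} [NeZero n] (hk : k ≠ 0) (hkn : k < n) :
    (k : Fin n) ≠ 0 := by
  rw [ne_eq, Fin.natCast_eq_zero]
  exact Nat.not_dvd_of_pos_of_lt (Nat.pos_of_ne_zero hk) hkn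

namespace SimpleGraph

theorem cycleGraph_compl_adj_add_natCast {n k : ℕ} (hk : 2 ≤ k) (hkn : k ≤ n) (u : Fin (n + 2)) :
    (cycleGraph (n + 2))ᶜ.Adj u (u + (k : Fin (n + 2))) := by
  have h₁ := Fin.natCast_ne_zero_of_lt (n := n + 2) (k := k - 1) (by omega) (by omega)
  have h₂ := Fin.natCast_ne_zero_of_lt (n := n + 2) (k := k + 1) (by omega) (by omega)
  have h₃ := Fin.natCast_ne_zero_of_lt (n := n + 2) (k := k) (by omega) (by omega)
  push_cast [Nat.cast_sub (by omega : 1 ≤ k)] at h₁ h₂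
  rw [compl_adj, cycleGraph_adj]
  refine ⟨fun h ↦ h₃ ?_, fun h ↦ h.elim (fun h ↦ h₂ ?_) (fun h ↦ h₁ ?_)⟩
  · linear_combination -h
  · linear_combination -h
  · linear_combination h

theorem cycleGraph_compl_commonNeighbors_nonempty {n : ℕ} (hn : 3 ≤ n) {u v : Fin (n + 2)}
    (h : (cycleGraph (n + 2)).Adj u v) : ((cycleGraph (n + 2))ᶜ.commonNeighbors u v).Nonempty := by
  suffices key : ∀ w, ((cycleGraph (n + 2))ᶜ.commonNeighbors w (w + 1)).Nonempty by
    rcases h with h | h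
    · rw [sub_eq_iff_eq_add'.mp h, commonNeighbors_symm]
      exact key v
    · rw [sub_eq_iff_eq_add'.mp h]
      exact key u
  intro w
  have hshift : w + ((3 : ℕ) : Fin (n + 2)) = w + 1 + ((2 : ℕ) : Fin (n + 2)) := by
    push_cast
    ring
  refine ⟨w + (3 : ℕ), (mem_commonNeighbors _).mpr ⟨?_, ?_⟩⟩
  · exact cycleGraph_compl_adj_add_natCast (by norm_num) hn w
  · rw [hshift]
    exact cycleGraph_compl_adj_add_natCast le_rfl (by omega) (w + 1)

theorem ncard_neighborSet_cycleGraph {n : ℕ} (hn : 1 ≤ n) (v : Fin (n + 2)) :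
    ((cycleGraph (n + 2)).neighborSet v).ncard = 2 := by
  rw [cycleGraph_neighborSet, Set.ncard_pair]
  intro h
  exact Fin.natCast_ne_zero_of_lt (n := n + 2) (k := 2) two_ne_zero (by omega)
    (by push_cast; linear_combination -h)

end SimpleGraph

open SimpleGraph

/-- For n ≥ 5 the complement of the cycle C_n is connected and
2-metamour-regular, and its metamour graph equals C_n. -/
theorem compl_cycleGraph_metamour (n : ℕ) (hn : 5 ≤ n) :
    ((SimpleGraph.cycleGraph n)ᶜ).Connected ∧
    (∀ v : Fin n, ((SimpleGraph.cycleGraph n)ᶜ).metamourDegree v = 2) ∧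
    ((SimpleGraph.cycleGraph n)ᶜ).metamour = SimpleGraph.cycleGraph n := by
  obtain ⟨m, rfl⟩ : ∃ m, n = m + 2 := ⟨n - 2, by omega⟩
  have hmeta : (cycleGraph (m + 2))ᶜ.metamour = cycleGraph (m + 2) :=
    compl_metamour_eq_self fun _ _ ↦ cycleGraph_compl_commonNeighbors_nonempty (by omega)
  refine ⟨connected_of_compl_le_metamour (by rw [compl_compl, hmeta]), fun v ↦ ?_, hmeta⟩
  change ((cycleGraph (m + 2))ᶜ.metamour.neighborSet v).ncard = 2
  rw [hmeta]
  exact ncard_neighborSet_cycleGraph (by omega) v
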